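/- The characteristic Z-valued series identity of the Lazard bisection holds: the characteristic series of M(Σ,θ) equals the product of the characteristic series of L and of M(B,θ_B) in the large algebra Z[[M(Σ,θ)]]; equivalently, for every trace t, the number of pairs (l,m) ∈ L × M(B,θ_B) with l·m = t equals 1. -/

import Mathlib

/-- The relation `ab ~ ba` for commuting pairs `(a,b) ∈ θ`. -/
def traceRel {α : Type} (θ : α → α → Prop) : FreeMonoid α → FreeMonoid α → Prop :=
  fun u v => ∃ a b, θ a b ∧ u = FreeMonoid.of a * FreeMonoid.of b ∧
    v = FreeMonoid.of b * FreeMonoid.of a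

/-- The trace congruence generated by `ab ~ ba` for `(a,b) ∈ θ`. -/
def traceCon {α : Type} (θ : α → α → Prop) : Con (FreeMonoid α) := conGen (traceRel θ)

/-- The trace monoid `M(Σ,θ)`. -/
abbrev TraceMonoid {α : Type} (θ : α → α → Prop) := (traceCon θ).Quotient

/-- The canonical surjection `φ : Σ* → M(Σ,θ)`. -/
def phi {α : Type} (θ : α → α → Prop) : FreeMonoid α →* TraceMonoid θ := (traceCon θ).mk'

/-- The terminal alphabet of a trace. -/
def TA {α : Type} (θ : α → α → Prop) (t : TraceMonoid θ) : Set α :=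
  {x | ∃ u : TraceMonoid θ, t = u * phi θ (FreeMonoid.of x)}

/-- The left Lazard factor: traces whose terminal alphabet avoids `B`. -/
def leftFactor {α : Type} (θ : α → α → Prop) (B : Set α) : Set (TraceMonoid θ) :=
  {t | TA θ t ∩ B = ∅}

/-- The submonoid of `M(Σ,θ)` generated by the letters of `B`,
identified with `M(B,θ_B)`. -/
def subTrace {α : Type} (θ : α → α → Prop) (B : Set α) : Submonoid (TraceMonoid θ) :=
  Submonoid.closure ((fun x => phi θ (FreeMonoid.of x)) '' B)

/-!
Two words represent the same trace iff their projections onto every set of pairwise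
non-commuting letters agree (the projection lemma). Hence the trace monoid is right cancellative,
and a terminal letter of `x * y` is a terminal letter of `x` or of `y`. A factorization
`t = l * m` is obtained by splitting terminal letters from `B` off `t`. For uniqueness, the
last letter `b ∈ B` of `m₁` is terminal in `l₂ * m₂`, hence in `m₂` because `l₂` has no
terminal letter in `B`; cancelling `b` on both sides gives a shorter instance.
-/

open scoped Classical

namespace TraceMonoid

variable {α : Type} {θ : α → α → Prop}

def ofList (θ : α → α → Prop) (w : List α) : TraceMonoid θ := phi θ (FreeMonoid.ofList w)

@[simp]
lemma ofList_nil : ofList θ [] = 1 := map_one _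

@[simp]
lemma ofList_append (u v : List α) : ofList θ (u ++ v) = ofList θ u * ofList θ v := by
  simp [ofList, FreeMonoid.ofList_append]

lemma ofList_singleton (a : α) : ofList θ [a] = phi θ (FreeMonoid.of a) := rfl

lemma ofList_cons (a : α) (w : List α) :
    ofList θ (a :: w) = phi θ (FreeMonoid.of a) * ofList θ w := by
  rw [← List.singleton_append, ofList_append, ofList_singleton]

lemma ofList_surjective : Function.Surjective (ofList θ) :=
  Con.mk'_surjective.comp FreeMonoid.ofList.surjective

lemma commute_of_forall_mem {a : α} {w : List α} (h : ∀ c ∈ w, θ a c ∨ θ c a) :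
    Commute (phi θ (FreeMonoid.of a)) (ofList θ w) := by
  have letter : ∀ b c, θ b c → Commute (phi θ (FreeMonoid.of b)) (phi θ (FreeMonoid.of c)) :=
    fun b c hbc => (Con.eq _).2 (ConGen.Rel.of _ _ ⟨b, c, hbc, rfl, rfl⟩)
  induction w with
  | nil => exact Commute.one_right _
  | cons c w ih =>
    rw [ofList_cons]
    refine Commute.mul_right ?_ (ih fun d hd => h d (List.mem_cons_of_mem c hd))
    rcases h c List.mem_cons_self with hac | hca
    · exact letter a c hac
    · exact (letter c a hca).symm

noncomputable def restrict (S : Set α) : FreeMonoid α →* FreeMonoid α where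
  toFun w := FreeMonoid.ofList (w.toList.filter (· ∈ S))
  map_one' := rfl
  map_mul' _ _ := List.filter_append ..

lemma filter_eq_of_ofList_eq {S : Set α} (hS : S.Pairwise fun a b => ¬θ a b) {u v : List α}
    (h : ofList θ u = ofList θ v) : u.filter (· ∈ S) = v.filter (· ∈ S) := by
  have hle : traceCon θ ≤ Con.ker (restrict S) := by
    refine Con.conGen_le.2 ?_
    rintro _ _ ⟨a, b, hab, rfl, rfl⟩
    show FreeMonoid.ofList ([a, b].filter (· ∈ S)) = FreeMonoid.ofList ([b, a].filter (· ∈ S))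
    by_cases ha : a ∈ S <;> by_cases hb : b ∈ S
    · obtain rfl : a = b := by_contra fun hne => hS ha hb hne hab
      rfl
    all_goals simp [ha, hb]
  exact congrArg FreeMonoid.toList (hle ((Con.eq _).1 h))

lemma perm_of_ofList_eq {u v : List α} (h : ofList θ u = ofList θ v) : u.Perm v := by
  refine List.perm_iff_count.2 fun c => ?_
  have hc := congrArg List.length (filter_eq_of_ofList_eq (Set.pairwise_singleton c _) h)
  simpa only [List.count_eq_length_filter, Set.mem_singleton_iff, beq_eq_decide] using hc

/-- The projection lemma of trace theory. -/
theorem ofList_eq_of_filter_eq {u v : List α}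
    (h : ∀ S : Set α, S.Pairwise (fun a b => ¬θ a b) → u.filter (· ∈ S) = v.filter (· ∈ S)) :
    ofList θ u = ofList θ v := by
  induction u generalizing v with
  | nil =>
    obtain rfl : v = [] := List.eq_nil_iff_forall_not_mem.2 fun c hc =>
      List.filter_eq_nil_iff.1 (h {c} (Set.pairwise_singleton c _)).symm c hc (by simp)
    rfl
  | cons a u ih =>
    have hav : a ∈ v := by
      have := h {a} (Set.pairwise_singleton a _)
      rw [List.filter_cons_of_pos (by simp)] at this
      exact List.mem_of_mem_filter (this ▸ List.mem_cons_self)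
    obtain ⟨v₁, v₂, rfl, hav₁⟩ := List.eq_append_cons_of_mem hav
    have hcomm : ∀ c ∈ v₁, θ a c ∨ θ c a := by
      intro c hc
      by_contra! hac
      have hS : ({a, c} : Set α).Pairwise fun a b => ¬θ a b :=
        Set.pairwise_pair.2 fun _ => hac
      have := h _ hS
      simp only [List.filter_cons, List.filter_append, Set.mem_insert_iff, true_or,
        decide_true, if_true] at this
      rcases List.cons_eq_append_iff.1 this with ⟨hnil, -⟩ | ⟨l, hl, -⟩
      · exact List.filter_eq_nil_iff.1 hnil c hc (by simp)
      · exact hav₁ (List.mem_of_mem_filter (hl ▸ List.mem_cons_self))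
    have hrest : ofList θ u = ofList θ (v₁ ++ v₂) := by
      refine ih fun S hS => ?_
      have := h S hS
      by_cases haS : a ∈ S
      · have hv₁ : v₁.filter (· ∈ S) = [] := List.filter_eq_nil_iff.2 fun x hx hxS =>
          (hcomm x hx).elim (hS haS (of_decide_eq_true hxS) (ne_of_mem_of_not_mem hx hav₁).symm)
            (hS (of_decide_eq_true hxS) haS (ne_of_mem_of_not_mem hx hav₁))
        simpa [List.filter_append, haS, hv₁] using this
      · simpa [List.filter_append, haS] using this
    rw [ofList_cons, hrest, ofList_append, ← mul_assoc, (commute_of_forall_mem hcomm).eq,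
      mul_assoc, ← ofList_cons, ofList_append]

theorem ofList_eq_ofList_iff {u v : List α} :
    ofList θ u = ofList θ v ↔
      ∀ S : Set α, S.Pairwise (fun a b => ¬θ a b) → u.filter (· ∈ S) = v.filter (· ∈ S) :=
  ⟨fun h _ hS => filter_eq_of_ofList_eq hS h, ofList_eq_of_filter_eq⟩

instance : IsRightCancelMul (TraceMonoid θ) where
  mul_right_cancel z x y h := by
    obtain ⟨u, rfl⟩ := ofList_surjective x
    obtain ⟨v, rfl⟩ := ofList_surjective y
    obtain ⟨w, rfl⟩ := ofList_surjective z
    simp only [← ofList_append, ofList_eq_ofList_iff] at h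
    exact ofList_eq_ofList_iff.2 fun S hS => by
      simpa only [List.filter_append, List.append_cancel_right_eq] using h S hS

theorem mem_TA_ofList_iff {b : α} {w : List α} :
    b ∈ TA θ (ofList θ w) ↔ ∀ S : Set α, S.Pairwise (fun a b => ¬θ a b) → b ∈ S →
      (w.filter (· ∈ S)).getLast? = some b := by
  constructor
  · rintro ⟨u, hu⟩ S hS hbS
    obtain ⟨w', rfl⟩ := ofList_surjective u
    rw [← ofList_singleton, ← ofList_append] at hu
    simp [filter_eq_of_ofList_eq hS hu, List.getLast?_append, hbS]
  · intro h
    have hbw : b ∈ w :=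
      List.mem_of_mem_filter (List.mem_of_getLast? (h {b} (Set.pairwise_singleton b _) rfl))
    obtain ⟨s, r, hw, hbs⟩ := List.eq_append_cons_of_mem (List.mem_reverse.2 hbw)
    obtain rfl : w = r.reverse ++ b :: s.reverse := by simpa using congrArg List.reverse hw
    have hcomm : ∀ c ∈ s.reverse, θ b c ∨ θ c b := by
      intro c hc
      by_contra! hbc
      have hS : ({b, c} : Set α).Pairwise fun a b => ¬θ a b :=
        Set.pairwise_pair.2 fun _ => hbc
      have hlast := h _ hS (by simp)
      rw [List.filter_append, List.filter_cons_of_pos (by simp), ← List.singleton_append,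
        ← List.append_assoc, List.getLast?_append, Option.or_eq_some_iff,
        List.getLast?_eq_none_iff] at hlast
      rcases hlast with hb | ⟨hnil, -⟩
      · exact hbs (List.mem_reverse.1 (List.mem_of_mem_filter (List.mem_of_getLast? hb)))
      · exact List.filter_eq_nil_iff.1 hnil c hc (by simp)
    refine ⟨ofList θ (r.reverse ++ s.reverse), ?_⟩
    rw [ofList_append, ofList_cons, ofList_append, mul_assoc, (commute_of_forall_mem hcomm).eq]

theorem mem_TA_mul {x y : TraceMonoid θ} {b : α} (h : b ∈ TA θ (x * y)) :
    b ∈ TA θ x ∨ b ∈ TA θ y := by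
  obtain ⟨u, rfl⟩ := ofList_surjective x
  obtain ⟨v, rfl⟩ := ofList_surjective y
  rw [← ofList_append, mem_TA_ofList_iff] at h
  simp only [mem_TA_ofList_iff]
  by_cases hbv : b ∈ v
  · refine Or.inr fun S hS hbS => ?_
    have hlast := h S hS hbS
    rw [List.filter_append, List.getLast?_append, Option.or_eq_some_iff,
      List.getLast?_eq_none_iff] at hlast
    rcases hlast with hlast | ⟨hnil, -⟩
    · exact hlast
    · exact absurd hbS (by simpa using List.filter_eq_nil_iff.1 hnil b hbv)
  · refine Or.inl fun S hS hbS => ?_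
    have hlast := h S hS hbS
    rw [List.filter_append, List.getLast?_append, Option.or_eq_some_iff] at hlast
    rcases hlast with hlast | ⟨-, hlast⟩
    · exact absurd (List.mem_of_mem_filter (List.mem_of_getLast? hlast)) hbv
    · exact hlast

variable {B : Set α}

theorem ofList_mem_subTrace_iff {w : List α} : ofList θ w ∈ subTrace θ B ↔ ∀ c ∈ w, c ∈ B := by
  refine ⟨fun h => ?_, fun h => ?_⟩
  · have hrep : ∀ t ∈ subTrace θ B, ∃ w', ofList θ w' = t ∧ ∀ c ∈ w', c ∈ B := by
      intro t ht
      induction ht using Submonoid.closure_induction with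
      | mem _ hx =>
        obtain ⟨b, hb, rfl⟩ := hx
        exact ⟨[b], rfl, by simpa using hb⟩
      | one => exact ⟨[], ofList_nil, by simp⟩
      | mul _ _ _ _ ihx ihy =>
        obtain ⟨u, rfl, hu⟩ := ihx
        obtain ⟨v, rfl, hv⟩ := ihy
        exact ⟨u ++ v, ofList_append u v, List.forall_mem_append.2 ⟨hu, hv⟩⟩
    obtain ⟨w', hw', hB⟩ := hrep _ h
    exact fun c hc => hB c ((perm_of_ofList_eq hw').mem_iff.2 hc)
  · induction w with
    | nil => exact one_mem _
    | cons a w ih =>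
      rw [ofList_cons]
      exact mul_mem (Submonoid.subset_closure ⟨a, h a List.mem_cons_self, rfl⟩)
        (ih fun c hc => h c (List.mem_cons_of_mem a hc))

theorem mem_subTrace_of_mul_mem {x y : TraceMonoid θ} (h : x * y ∈ subTrace θ B) :
    x ∈ subTrace θ B := by
  obtain ⟨u, rfl⟩ := ofList_surjective x
  obtain ⟨v, rfl⟩ := ofList_surjective y
  rw [← ofList_append, ofList_mem_subTrace_iff] at h
  exact ofList_mem_subTrace_iff.2 fun c hc => h c (List.mem_append_left v hc)

theorem eq_one_of_mul_mem_leftFactor {l m : TraceMonoid θ} (hm : m ∈ subTrace θ B)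
    (h : l * m ∈ leftFactor θ B) : m = 1 := by
  induction hm using Submonoid.closure_induction_right with
  | one => rfl
  | mul_right x _ _ hy _ =>
    obtain ⟨b, hb, rfl⟩ := hy
    exact absurd (h.subset ⟨⟨l * x, (mul_assoc _ _ _).symm⟩, hb⟩) (Set.notMem_empty b)

variable (B) in
theorem exists_mul_eq (t : TraceMonoid θ) :
    ∃ l ∈ leftFactor θ B, ∃ m ∈ subTrace θ B, l * m = t := by
  obtain ⟨w, rfl⟩ := ofList_surjective t
  induction h : w.length using Nat.strong_induction_on generalizing w with
  | _ n ih =>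
    by_cases hl : ofList θ w ∈ leftFactor θ B
    · exact ⟨_, hl, 1, one_mem _, mul_one _⟩
    obtain ⟨b, ⟨u, hu⟩, hb⟩ := Set.nonempty_iff_ne_empty.2 hl
    obtain ⟨w', rfl⟩ := ofList_surjective u
    have hlen : w'.length < n := by
      rw [← ofList_singleton, ← ofList_append] at hu
      simp [← h, (perm_of_ofList_eq hu).length_eq]
    obtain ⟨l, hl, m, hm, hlm⟩ := ih _ hlen w' rfl
    exact ⟨l, hl, m * phi θ (FreeMonoid.of b), mul_mem hm (Submonoid.subset_closure ⟨b, hb, rfl⟩),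
      by rw [hu, ← hlm, mul_assoc]⟩

theorem eq_and_eq_of_mul_eq_mul {l₁ l₂ m₁ m₂ : TraceMonoid θ} (hl₁ : l₁ ∈ leftFactor θ B)
    (hl₂ : l₂ ∈ leftFactor θ B) (hm₁ : m₁ ∈ subTrace θ B) (hm₂ : m₂ ∈ subTrace θ B)
    (h : l₁ * m₁ = l₂ * m₂) : l₁ = l₂ ∧ m₁ = m₂ := by
  induction hm₁ using Submonoid.closure_induction_right generalizing m₂ with
  | one =>
    rw [mul_one] at h
    obtain rfl := eq_one_of_mul_mem_leftFactor hm₂ (h ▸ hl₁)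
    exact ⟨h.trans (mul_one l₂), rfl⟩
  | mul_right x _ _ hy ih =>
    obtain ⟨b, hb, rfl⟩ := hy
    have hbTA : b ∈ TA θ (l₂ * m₂) := ⟨l₁ * x, by rw [← h, mul_assoc]⟩
    obtain ⟨u, rfl⟩ : b ∈ TA θ m₂ := (mem_TA_mul hbTA).resolve_left fun hb₂ =>
      Set.notMem_empty b (hl₂.subset ⟨hb₂, hb⟩)
    rw [← mul_assoc, ← mul_assoc] at h
    obtain ⟨rfl, rfl⟩ := ih (mem_subTrace_of_mul_mem hm₂) (mul_right_cancel h)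
    exact ⟨rfl, rfl⟩

end TraceMonoid

theorem characteristic_series_identity_general {α : Type} (θ : α → α → Prop) (B : Set α)
    (t : TraceMonoid θ) :
    ∃! p : TraceMonoid θ × TraceMonoid θ,
      p.1 ∈ leftFactor θ B ∧ p.2 ∈ subTrace θ B ∧ p.1 * p.2 = t := by
  obtain ⟨l, hl, m, hm, rfl⟩ := TraceMonoid.exists_mul_eq B t
  refine ⟨(l, m), ⟨hl, hm, rfl⟩, ?_⟩
  rintro ⟨l', m'⟩ ⟨hl', hm', h⟩
  obtain ⟨rfl, rfl⟩ := TraceMonoid.eq_and_eq_of_mul_eq_mul hl' hl hm' hm h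
  rfl

/-- the characteristic-series identity
`M(Σ,θ) = L · M(B,θ_B)` — for every trace `t` there is exactly one pair
`(l,m) ∈ L × M(B,θ_B)` with `l·m = t`. -/
theorem characteristic_series_identity {α : Type} [Fintype α] (θ : α → α → Prop)
    (hrefl : ∀ x, θ x x) (hsymm : ∀ x y, θ x y → θ y x) (B : Set α)
    (t : TraceMonoid θ) :
    ∃! p : TraceMonoid θ × TraceMonoid θ,
      p.1 ∈ leftFactor θ B ∧ p.2 ∈ subTrace θ B ∧ p.1 * p.2 = t :=
  characteristic_series_identity_general θ B t
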